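/- Let F be a finitely generated free group, α: F → F an injective endomorphism, and M_α = ⟨F, t | t⁻¹ft = α(f), f ∈ F⟩ the associated ascending HNN extension. Then the profinite completion of M_α is isomorphic to a semidirect product Ẑ ⋉ P, where P = ⋂_{n∈ℕ} α̂ⁿ(F̂) is the intersection of the images of the iterates of the induced endomorphism α̂ of the profinite completion F̂ of F, and the action of Ẑ is via the (automorphic) restriction of α̂ to P. -/

import Mathlib

/-!
The projection `π : M_α → ℤ` killing `F`, with the section `n ↦ tⁿ`, completes to a split
surjection `π̂ : M̂_α → Ẑ`, so `M̂_α ≅ ker π̂ ⋊ Ẑ` with `Ẑ` acting by conjugation by `t̂`. Since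
`î ∘ α̂ = t̂ î t̂⁻¹` for `î : F̂ → M̂_α`, it suffices that `î` maps `P` isomorphically onto
`ker π̂`.

In a finite quotient of `M_α`, conjugation by `t` maps the image of `F` into itself, hence onto
it; so that image is normal with cyclic quotient generated by `t`, and `ker π̂` is the closure of
the image of `F`, i.e. `î(F̂)`. As `ker π̂` is stable under conjugation by `t̂⁻ⁿ`, compactness
upgrades this to `ker π̂ = î(P)`.

For injectivity on `P`, let `y ∈ P` be nontrivial modulo `N`. As `F` is finitely generated,
there is a finite-index `Λ ≤ N` with `α(Λ) ≤ Λ`, and the increasing chain `α⁻ⁿ(Λ)` stabilises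
at some `K = α⁻ⁿ(Λ)` with `α⁻¹(K) = K`. Writing `y = α̂ⁿ(z)`, if `y` vanished
modulo `K` then so would `z`, and then `y` modulo `Λ`. But `α` induces a permutation of `F/K`,
and letting `F` act on `F/K` by translations and `t` by that permutation gives a finite quotient
of `M_α` in which `F/K` survives; so `î(y) ≠ 1`.
-/

/-- The index type of finite quotients: finite-index normal subgroups. -/
def FinQuot (G : Type*) [Group G] : Type _ :=
  {N : Subgroup G // N.Normal ∧ N.FiniteIndex}

instance {G : Type*} [Group G] (N : FinQuot G) : N.1.Normal := N.2.1
instance {G : Type*} [Group G] (N : FinQuot G) : N.1.FiniteIndex := N.2.2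

instance {G : Type*} [Group G] (N : FinQuot G) : TopologicalSpace (G ⧸ N.1) := ⊥

/-- The subgroup of compatible families in the product of all finite quotients. -/
def profCompat (G : Type*) [Group G] : Subgroup (Π N : FinQuot G, G ⧸ N.1) where
  carrier := {x | ∀ (N M : FinQuot G) (h : N.1 ≤ M.1),
    QuotientGroup.map N.1 M.1 (MonoidHom.id G) (by simpa using h) (x N) = x M}
  one_mem' := by intro N M h; simp
  mul_mem' := by
    intro a b ha hb N M h
    simp only [Pi.mul_apply, map_mul, ha N M h, hb N M h]
  inv_mem' := by
    intro a ha N M h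
    simp only [Pi.inv_apply, map_inv, ha N M h]

/-- The profinite completion of a group, as the inverse limit of its finite quotients. -/
def ProfComp (G : Type*) [Group G] : Type _ := profCompat G

instance {G : Type*} [Group G] : Group (ProfComp G) :=
  inferInstanceAs (Group (profCompat G))

instance {G : Type*} [Group G] : TopologicalSpace (ProfComp G) :=
  inferInstanceAs (TopologicalSpace {x : Π N : FinQuot G, G ⧸ N.1 // x ∈ profCompat G})

/-- The canonical map from a group to its profinite completion. -/
def toProf (G : Type*) [Group G] : G →* ProfComp G where
  toFun g := ⟨fun N => QuotientGroup.mk g, by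
    intro N M h
    simp [QuotientGroup.map_mk]⟩
  map_one' := by apply Subtype.ext; funext N; rfl
  map_mul' a b := by apply Subtype.ext; funext N; rfl

/-- The pullback of a finite-index normal subgroup along a homomorphism. -/
def pullFQ {Λ Γ : Type*} [Group Λ] [Group Γ] (φ : Λ →* Γ) (N : FinQuot Γ) : FinQuot Λ :=
  ⟨N.1.comap φ, N.2.1.comap φ, ⟨by
    refine ne_zero_of_dvd_ne_zero N.2.2.index_ne_zero ?_
    rw [Subgroup.index_comap]
    exact Subgroup.relIndex_dvd_index_of_normal N.1 φ.range⟩⟩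

/-- The induced homomorphism between profinite completions. -/
def profMap {Λ Γ : Type*} [Group Λ] [Group Γ] (φ : Λ →* Γ) :
    ProfComp Λ →* ProfComp Γ where
  toFun x := ⟨fun N => QuotientGroup.map (pullFQ φ N).1 N.1 φ le_rfl (x.1 (pullFQ φ N)), by
    intro N M h
    obtain ⟨g, hg⟩ := QuotientGroup.mk_surjective (x.1 (pullFQ φ N))
    have hx := x.2 (pullFQ φ N) (pullFQ φ M) (Subgroup.comap_mono h)
    show QuotientGroup.map _ _ _ _
        (QuotientGroup.map _ _ φ _ (x.1 (pullFQ φ N))) =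
      QuotientGroup.map _ _ φ _ (x.1 (pullFQ φ M))
    rw [← hx, ← hg]
    rfl⟩
  map_one' := by
    apply Subtype.ext
    funext N
    show QuotientGroup.map _ _ φ _ ((1 : ProfComp Λ).1 (pullFQ φ N)) = _
    rw [show ((1 : ProfComp Λ).1 (pullFQ φ N)) = 1 from rfl, map_one]
    rfl
  map_mul' a b := by
    apply Subtype.ext
    funext N
    show QuotientGroup.map _ _ _ _ ((a * b).1 (pullFQ φ N)) = _
    have : (a * b).1 (pullFQ φ N) = a.1 (pullFQ φ N) * b.1 (pullFQ φ N) := rfl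
    rw [this, map_mul]
    rfl

/-- A group is residually finite if every nontrivial element survives in some finite
quotient. -/
def ResiduallyFinite (G : Type*) [Group G] : Prop :=
  ∀ g : G, g ≠ 1 → ∃ N : Subgroup G, N.Normal ∧ N.FiniteIndex ∧ g ∉ N

/-- The mapping torus (ascending HNN extension) of an injective endomorphism `α` of a
group `G`: `⟨G, t ∣ t⁻¹ g t = α g⟩`, realized as the HNN extension of `G` along the
isomorphism `G ≃ α.range`. -/
noncomputable def MappingTorus {G : Type*} [Group G] (α : G →* G)
    (hα : Function.Injective ⇑α) : Type _ :=
  HNNExtension G ⊤ α.range (Subgroup.topEquiv.trans (MonoidHom.ofInjective hα))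

noncomputable instance {G : Type*} [Group G] (α : G →* G) (hα : Function.Injective ⇑α) :
    Group (MappingTorus α hα) :=
  inferInstanceAs (Group (HNNExtension G ⊤ α.range
    (Subgroup.topEquiv.trans (MonoidHom.ofInjective hα))))

/-- The canonical embedding of the base group into the mapping torus. -/
noncomputable def MappingTorus.of {G : Type*} [Group G] (α : G →* G)
    (hα : Function.Injective ⇑α) : G →* MappingTorus α hα :=
  HNNExtension.of

/-- The stable letter of the mapping torus. -/
noncomputable def MappingTorus.t {G : Type*} [Group G] (α : G →* G)
    (hα : Function.Injective ⇑α) : MappingTorus α hα :=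
  HNNExtension.t

/-- The induced endomorphism of the profinite completion, as a monoid endomorphism
(so that it can be iterated). -/
def profEnd {G : Type*} [Group G] (α : G →* G) : Monoid.End (ProfComp G) :=
  profMap α

/-- The eventual image `P = ⋂ₙ α̂ⁿ(Ĝ)` of the induced endomorphism `α̂` of the
profinite completion. -/
def profEventualImage {G : Type*} [Group G] (α : G →* G) : Subgroup (ProfComp G) :=
  ⨅ n : ℕ, Subgroup.map (profEnd α ^ n) ⊤

open Function

theorem QuotientGroup.map_injective_of_comap_le {G H : Type*} [Group G] [Group H]
    {N : Subgroup G} [N.Normal] {M : Subgroup H} [M.Normal] (f : G →* H) (h : N ≤ M.comap f)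
    (h' : M.comap f ≤ N) : Injective (QuotientGroup.map N M f h) := by
  rw [injective_iff_map_eq_one]
  rintro ⟨g⟩ hg
  exact (QuotientGroup.eq_one_iff g).2 (h' ((QuotientGroup.eq_one_iff (f g)).1 hg))

theorem Group.FG.finite_monoidHom (G Q : Type*) [Group G] [Group.FG G] [Group Q] [Finite Q] :
    Finite (G →* Q) := by
  obtain ⟨S, hS⟩ := Group.FG.out (G := G)
  exact Finite.of_injective (fun φ : G →* Q => fun s : S => φ s) fun φ ψ h =>
    MonoidHom.eq_of_eqOn_dense hS fun s hs => congrFun h ⟨s, hs⟩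

namespace FinQuot

variable {G : Type*} [Group G]

def ker {Q : Type*} [Group Q] [Finite Q] (φ : G →* Q) : FinQuot G :=
  ⟨φ.ker, inferInstance, Subgroup.finiteIndex_ker φ⟩

def finsetInf (I : Finset (FinQuot G)) : FinQuot G :=
  ⟨⨅ N ∈ I, N.1, Subgroup.normal_iInf_normal fun N => Subgroup.normal_iInf_normal fun _ => N.2.1,
    Subgroup.finiteIndex_iInf' _ fun N _ => N.2.2⟩

theorem finsetInf_le {I : Finset (FinQuot G)} {N : FinQuot G} (hN : N ∈ I) :
    (finsetInf I).1 ≤ N.1 :=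
  iInf₂_le N hN

theorem exists_le_and_le_comap [Group.FG G] (α : G →* G) (N : FinQuot G) :
    ∃ Λ : FinQuot G, Λ.1 ≤ N.1 ∧ Λ.1 ≤ Λ.1.comap α := by
  have := Group.FG.finite_monoidHom G (G ⧸ N.1)
  refine ⟨⟨⨅ φ : G →* G ⧸ N.1, φ.ker, Subgroup.normal_iInf_normal fun φ => φ.normal_ker,
    Subgroup.finiteIndex_iInf fun φ => Subgroup.finiteIndex_ker φ⟩, ?_, ?_⟩
  · exact (iInf_le _ (QuotientGroup.mk' N.1)).trans (QuotientGroup.ker_mk' N.1).le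
  · intro g hg
    simp only [Subgroup.mem_comap, Subgroup.mem_iInf] at hg ⊢
    exact fun φ => hg (φ.comp α)

theorem exists_pullFQ_iterate_fixed (α : G →* G) (Λ : FinQuot G) (hΛ : Λ.1 ≤ Λ.1.comap α) :
    ∃ n, pullFQ α ((pullFQ α)^[n] Λ) = (pullFQ α)^[n] Λ := by
  set L := fun n => (pullFQ α)^[n] Λ
  have hmono : ∀ n, (L n).1 ≤ (pullFQ α (L n)).1 := by
    intro n
    induction n with
    | zero => exact hΛ
    | succ n ih =>
      simp only [L, iterate_succ_apply'] at ih ⊢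
      exact Subgroup.comap_mono ih
  set n := argmin fun m => (L m).1.index
  refine ⟨n, Subtype.ext (eq_of_le_of_not_lt (hmono n) fun hlt => ?_).symm⟩
  have hmin := argmin_le (fun m => (L m).1.index) (n + 1)
  simp only [L, iterate_succ_apply'] at hmin
  exact (Subgroup.index_strictAnti hlt).not_ge hmin

end FinQuot

namespace ProfComp

variable {G : Type*} [Group G]

theorem ext {x y : ProfComp G} (h : ∀ N : FinQuot G, x.1 N = y.1 N) : x = y :=
  Subtype.ext (funext h)

theorem coord_eq_one_of_le (x : ProfComp G) {N M : FinQuot G} (h : N.1 ≤ M.1)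
    (hx : x.1 N = 1) : x.1 M = 1 := by
  rw [← x.2 N M h, hx, map_one]

theorem coord_eq_mk_of_le (x : ProfComp G) {N M : FinQuot G} (h : N.1 ≤ M.1) {g : G}
    (hx : x.1 N = g) : x.1 M = g := by
  rw [← x.2 N M h, hx]
  rfl

end ProfComp

section Topology

variable {G H : Type*} [Group G] [Group H]

instance (N : FinQuot G) : DiscreteTopology (G ⧸ N.1) := ⟨rfl⟩

instance (N : FinQuot G) : IsTopologicalGroup (G ⧸ N.1) where

instance : IsTopologicalGroup (ProfComp G) :=
  inferInstanceAs (IsTopologicalGroup (profCompat G))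

instance : T2Space (ProfComp G) :=
  inferInstanceAs (T2Space {x : Π N : FinQuot G, G ⧸ N.1 // x ∈ profCompat G})

theorem isClosed_profCompat : IsClosed (profCompat G : Set (Π N : FinQuot G, G ⧸ N.1)) := by
  simp only [profCompat, Subgroup.coe_set_mk, Submonoid.coe_set_mk, Subsemigroup.coe_set_mk,
    Set.ofPred_forall]
  exact isClosed_iInter fun N => isClosed_iInter fun M => isClosed_iInter fun _ =>
    isClosed_eq (continuous_of_discreteTopology.comp (continuous_apply N)) (continuous_apply M)

instance : CompactSpace (ProfComp G) :=
  isCompact_iff_compactSpace.mp isClosed_profCompat.isCompact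

theorem continuous_profMap (φ : H →* G) : Continuous (profMap φ) :=
  Continuous.subtype_mk (continuous_pi fun _ =>
    continuous_of_discreteTopology.comp ((continuous_apply _).comp continuous_subtype_val)) _

theorem ProfComp.mem_closure_of_forall_exists_coord_eq {S : Set (ProfComp G)} {x : ProfComp G}
    (h : ∀ N : FinQuot G, ∃ s ∈ S, s.1 N = x.1 N) : x ∈ closure S := by
  rw [mem_closure_iff]
  intro U hU hxU
  obtain ⟨V, hV, rfl⟩ := isOpen_induced_iff.mp hU
  obtain ⟨I, u, hu, hIV⟩ := isOpen_pi_iff.mp hV x.1 hxU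
  obtain ⟨s, hsS, hs⟩ := h (FinQuot.finsetInf I)
  refine ⟨s, hIV fun N hN => ?_, hsS⟩
  rw [← s.2 _ _ (FinQuot.finsetInf_le hN), hs, x.2 _ _ (FinQuot.finsetInf_le hN)]
  exact (hu N hN).2

theorem ProfComp.denseRange_toProf : DenseRange (toProf G) := fun x =>
  ProfComp.mem_closure_of_forall_exists_coord_eq fun N =>
    let ⟨g, hg⟩ := QuotientGroup.mk_surjective (x.1 N)
    ⟨toProf G g, ⟨g, rfl⟩, hg⟩

theorem ProfComp.funext_of_continuous {X : Type*} [TopologicalSpace X] [T2Space X]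
    {f f' : ProfComp G → X} (hf : Continuous f) (hf' : Continuous f')
    (h : ∀ g : G, f (toProf G g) = f' (toProf G g)) : f = f' :=
  ProfComp.denseRange_toProf.equalizer hf hf' (funext h)

end Topology

section Functoriality

variable {G H K : Type*} [Group G] [Group H] [Group K]

theorem profMap_coord_eq_one_iff (φ : H →* G) (x : ProfComp H) (N : FinQuot G) :
    (profMap φ x).1 N = 1 ↔ x.1 (pullFQ φ N) = 1 :=
  map_eq_one_iff _ (QuotientGroup.map_injective_of_comap_le φ le_rfl le_rfl)

theorem profMap_toProf (φ : H →* G) (h : H) : profMap φ (toProf H h) = toProf G (φ h) :=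
  ProfComp.ext fun _ => rfl

theorem profMap_comp (ψ : H →* K) (φ : G →* H) :
    profMap (ψ.comp φ) = (profMap ψ).comp (profMap φ) :=
  DFunLike.coe_injective <| ProfComp.funext_of_continuous (continuous_profMap _)
    ((continuous_profMap ψ).comp (continuous_profMap φ)) fun _ => by
      simp [profMap_toProf]

theorem profMap_id : profMap (MonoidHom.id G) = MonoidHom.id (ProfComp G) :=
  DFunLike.coe_injective <| ProfComp.funext_of_continuous (continuous_profMap _)
    continuous_id fun _ => by simp [profMap_toProf]

theorem profMap_one : profMap (1 : G →* H) = 1 :=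
  DFunLike.coe_injective <| ProfComp.funext_of_continuous (continuous_profMap _)
    continuous_const fun _ => by simp [profMap_toProf]

theorem profMap_conj (g : G) :
    profMap (MulAut.conj g).toMonoidHom = (MulAut.conj (toProf G g)).toMonoidHom :=
  DFunLike.coe_injective <| ProfComp.funext_of_continuous (continuous_profMap _)
    (show Continuous fun x => toProf G g * x * (toProf G g)⁻¹ by fun_prop) fun _ => by
      simp [profMap_toProf]

end Functoriality

section EventualImage

variable {G : Type*} [Group G] {α : G →* G}

theorem mem_profEventualImage_iff {y : ProfComp G} :
    y ∈ profEventualImage α ↔ ∀ n : ℕ, y ∈ Set.range (profMap α)^[n] := by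
  rw [profEventualImage, Subgroup.mem_iInf]
  exact forall_congr' fun n => ⟨fun ⟨z, _, hz⟩ => ⟨z, hz⟩, fun ⟨z, hz⟩ => ⟨z, trivial, hz⟩⟩

theorem profMap_mem_profEventualImage {y : ProfComp G} (hy : y ∈ profEventualImage α) :
    profMap α y ∈ profEventualImage α :=
  mem_profEventualImage_iff.2 fun n =>
    let ⟨z, hz⟩ := mem_profEventualImage_iff.1 hy n
    ⟨profMap α z, by rw [← iterate_succ_apply, iterate_succ_apply', hz]⟩

theorem iterate_profMap_coord_eq_one_iff (n : ℕ) (x : ProfComp G) (N : FinQuot G) :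
    ((profMap α)^[n] x).1 N = 1 ↔ x.1 ((pullFQ α)^[n] N) = 1 := by
  induction n generalizing N with
  | zero => rfl
  | succ n ih => rw [iterate_succ_apply', profMap_coord_eq_one_iff, ih, ← iterate_succ_apply]

end EventualImage

namespace MappingTorus

variable {G H : Type*} [Group G] [Group H] {α : G →* G} {hα : Injective α}

variable (α hα) in
noncomputable def lift (f : G →* H) (h : H) (hf : ∀ g, h * f g = f (α g) * h) :
    MappingTorus α hα →* H :=
  HNNExtension.lift f h fun a => by simpa [MonoidHom.ofInjective_apply] using hf a

@[simp]
theorem lift_of (f : G →* H) (h : H) (hf : ∀ g, h * f g = f (α g) * h) (g : G) :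
    lift α hα f h hf (of α hα g) = f g :=
  HNNExtension.lift_of _ _ _ g

@[simp]
theorem lift_t (f : G →* H) (h : H) (hf : ∀ g, h * f g = f (α g) * h) :
    lift α hα f h hf (t α hα) = h :=
  HNNExtension.lift_t _ _ _

theorem t_mul_of (g : G) : t α hα * of α hα g = of α hα (α g) * t α hα := by
  have h := HNNExtension.t_mul_of
    (φ := Subgroup.topEquiv.trans (MonoidHom.ofInjective hα)) ⟨g, trivial⟩
  simp only [Subgroup.topEquiv, MulEquiv.trans_apply, MonoidHom.ofInjective_apply] at h
  exact h

theorem of_comp : (of α hα).comp α = (MulAut.conj (t α hα)).toMonoidHom.comp (of α hα) := by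
  ext g
  simp [t_mul_of]

theorem hom_ext {f f' : MappingTorus α hα →* H} (hof : f.comp (of α hα) = f'.comp (of α hα))
    (ht : f (t α hα) = f' (t α hα)) : f = f' :=
  HNNExtension.hom_ext hof ht

theorem eq_top_of_range_of_le {S : Subgroup (MappingTorus α hα)} (hof : (of α hα).range ≤ S)
    (ht : t α hα ∈ S) : S = ⊤ :=
  eq_top_iff.2 fun x _ => HNNExtension.induction_on x (fun g => hof ⟨g, rfl⟩) ht
    (fun _ _ => mul_mem) fun _ => inv_mem

variable (α hα) in
noncomputable def proj : MappingTorus α hα →* Multiplicative ℤ :=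
  lift α hα 1 (Multiplicative.ofAdd 1) fun _ => by simp

variable (α hα) in
noncomputable def tpow : Multiplicative ℤ →* MappingTorus α hα :=
  zpowersHom _ (t α hα)

theorem proj_comp_of : (proj α hα).comp (of α hα) = 1 := by
  ext g
  simp [proj]

theorem proj_comp_tpow : (proj α hα).comp (tpow α hα) = MonoidHom.id _ :=
  MonoidHom.ext_mint (by simp [proj, tpow])

theorem eq_zpowersHom_comp_proj {f : MappingTorus α hα →* H} (hf : f.comp (of α hα) = 1) :
    f = (zpowersHom H (f (t α hα))).comp (proj α hα) :=
  hom_ext (by rw [hf, MonoidHom.comp_assoc, proj_comp_of, MonoidHom.comp_one]) (by simp [proj])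

theorem normal_range_comp_of {Q : Type*} [Group Q] [Finite Q] {q : MappingTorus α hα →* Q}
    (hq : Surjective q) : (q.comp (of α hα)).range.Normal := by
  set A := (q.comp (of α hα)).range
  have hnorm : (Subgroup.normalizer (A : Set Q)).comap q = ⊤ := by
    refine eq_top_of_range_of_le (by rintro _ ⟨g, rfl⟩; exact A.le_normalizer ⟨g, rfl⟩) ?_
    refine Subgroup.mem_normalizer_fintype fun _ ⟨g, hg⟩ => ⟨α g, ?_⟩
    simp [← hg, ← map_inv, ← map_mul, t_mul_of]
  rw [← Subgroup.normalizer_eq_top_iff, ← (Subgroup.comap_injective hq).eq_iff, hnorm,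
    Subgroup.comap_top]

theorem exists_coord_eq_of_of_profMap_proj_eq_one {x : ProfComp (MappingTorus α hα)}
    (hx : profMap (proj α hα) x = 1) (N : FinQuot (MappingTorus α hα)) :
    ∃ g : G, x.1 N = (of α hα g : MappingTorus α hα ⧸ N.1) := by
  set q := QuotientGroup.mk' N.1
  set A := (q.comp (of α hα)).range
  have : A.Normal := normal_range_comp_of (QuotientGroup.mk'_surjective N.1)
  set γ := (QuotientGroup.mk' A).comp q
  have hγ : γ = (zpowersHom _ (γ (t α hα))).comp (proj α hα) :=
    eq_zpowersHom_comp_proj (by ext g; exact (QuotientGroup.eq_one_iff _).2 ⟨g, rfl⟩)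
  set Z := FinQuot.ker (zpowersHom _ (γ (t α hα)))
  have hZ : (pullFQ (proj α hα) Z).1 = γ.ker := by
    rw [hγ, ← MonoidHom.comap_ker]
    rfl
  have hNZ : N.1 ≤ (pullFQ (proj α hα) Z).1 := by
    rw [hZ]
    intro n hn
    simp [γ, q, (QuotientGroup.eq_one_iff n).2 hn]
  have hxZ : x.1 (pullFQ (proj α hα) Z) = 1 :=
    (profMap_coord_eq_one_iff _ _ _).1 (by rw [hx]; rfl)
  obtain ⟨m, hm⟩ := QuotientGroup.mk_surjective (x.1 N)
  have hmγ : m ∈ γ.ker := by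
    rw [← hZ, ← QuotientGroup.eq_one_iff, ← hxZ]
    exact (ProfComp.coord_eq_mk_of_le x hNZ hm.symm).symm
  obtain ⟨g, hg⟩ := (QuotientGroup.eq_one_iff _).1 hmγ
  exact ⟨g, hm ▸ hg.symm⟩

theorem mem_range_profMap_of_of_profMap_proj_eq_one {x : ProfComp (MappingTorus α hα)}
    (hx : profMap (proj α hα) x = 1) : x ∈ Set.range (profMap (of α hα)) := by
  have hclosed : IsClosed (Set.range (profMap (of α hα))) :=
    (isCompact_range (continuous_profMap _)).isClosed
  refine hclosed.closure_subset_iff.2 (Set.range_comp_subset_range (toProf G) _)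
    (ProfComp.mem_closure_of_forall_exists_coord_eq fun N => ?_)
  obtain ⟨g, hg⟩ := exists_coord_eq_of_of_profMap_proj_eq_one hx N
  exact ⟨_, ⟨g, rfl⟩, by rw [comp_apply, profMap_toProf, hg]; rfl⟩

theorem profMap_of_profMap (w : ProfComp G) :
    profMap (of α hα) (profMap α w) =
      toProf _ (t α hα) * profMap (of α hα) w * (toProf _ (t α hα))⁻¹ := by
  rw [← MonoidHom.comp_apply, ← profMap_comp, of_comp, profMap_comp, profMap_conj]
  rfl

theorem profMap_of_iterate_profMap (n : ℕ) (w : ProfComp G) :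
    profMap (of α hα) ((profMap α)^[n] w) =
      toProf _ (t α hα) ^ n * profMap (of α hα) w * (toProf _ (t α hα) ^ n)⁻¹ := by
  induction n with
  | zero => simp
  | succ n ih => rw [iterate_succ_apply', profMap_of_profMap, ih]; group

theorem profMap_proj_profMap_of (y : ProfComp G) :
    profMap (proj α hα) (profMap (of α hα) y) = 1 := by
  rw [← MonoidHom.comp_apply, ← profMap_comp, proj_comp_of, profMap_one, MonoidHom.one_apply]

theorem profMap_proj_profMap_tpow (z : ProfComp (Multiplicative ℤ)) :
    profMap (proj α hα) (profMap (tpow α hα) z) = z := by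
  rw [← MonoidHom.comp_apply, ← profMap_comp, proj_comp_tpow, profMap_id, MonoidHom.id_apply]

theorem exists_mem_profEventualImage_of_profMap_proj_eq_one
    {x : ProfComp (MappingTorus α hα)} (hx : profMap (proj α hα) x = 1) :
    ∃ y ∈ profEventualImage α, profMap (of α hα) y = x := by
  set C : ℕ → Set (ProfComp G) := fun n =>
    Set.range (profMap α)^[n] ∩ profMap (of α hα) ⁻¹' {x}
  have hC : ∀ n, IsCompact (C n) := fun n =>
    (isCompact_range ((continuous_profMap α).iterate n)).inter_right
      (isClosed_singleton.preimage (continuous_profMap _))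
  have hCne : ∀ n, (C n).Nonempty := by
    intro n
    obtain ⟨w, hw⟩ := mem_range_profMap_of_of_profMap_proj_eq_one
      (x := (toProf _ (t α hα) ^ n)⁻¹ * x * toProf _ (t α hα) ^ n)
      (by rw [map_mul, map_mul, hx, map_inv]; group)
    refine ⟨(profMap α)^[n] w, ⟨w, rfl⟩, ?_⟩
    rw [Set.mem_preimage, profMap_of_iterate_profMap, hw, Set.mem_singleton_iff]
    group
  have hCanti : ∀ n, C (n + 1) ⊆ C n := fun n _ ⟨⟨w, hw⟩, hwx⟩ =>
    ⟨⟨profMap α w, by rw [← hw, iterate_succ_apply]⟩, hwx⟩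
  obtain ⟨y, hy⟩ := IsCompact.nonempty_iInter_of_sequence_nonempty_isCompact_isClosed
    C hCanti hCne (hC 0) fun n => (hC n).isClosed
  rw [Set.mem_iInter] at hy
  exact ⟨y, mem_profEventualImage_iff.2 fun n => (hy n).1, (hy 0).2⟩

theorem exists_pullFQ_of_eq {K : FinQuot G} (hK : pullFQ α K = K) :
    ∃ N : FinQuot (MappingTorus α hα), pullFQ (of α hα) N = K := by
  have hKα : K.1.comap α = K.1 := congrArg Subtype.val hK
  have hθ : Injective (QuotientGroup.map K.1 K.1 α hKα.ge) :=
    QuotientGroup.map_injective_of_comap_le α hKα.ge hKα.le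
  set θ : Equiv.Perm (G ⧸ K.1) := Equiv.ofBijective _ (Finite.injective_iff_bijective.1 hθ)
  set τ := (MulAction.toPermHom (G ⧸ K.1) (G ⧸ K.1)).comp (QuotientGroup.mk' K.1)
  set ψ := lift α hα τ θ fun g => Equiv.ext fun x => by
    induction x using QuotientGroup.induction_on
    simp [θ, τ, Equiv.ofBijective]
  refine ⟨FinQuot.ker ψ, Subtype.ext (Subgroup.ext fun g => ?_)⟩
  change ψ (of α hα g) = 1 ↔ g ∈ K.1
  rw [lift_of, ← QuotientGroup.eq_one_iff,
    ← map_one (MulAction.toPermHom (G ⧸ K.1) (G ⧸ K.1))]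
  exact MulAction.toPerm_injective.eq_iff

variable [Group.FG G]

theorem eq_one_of_mem_profEventualImage_of_profMap_of_eq_one
    {y : ProfComp G} (hy : y ∈ profEventualImage α) (h : profMap (of α hα) y = 1) : y = 1 := by
  refine ProfComp.ext fun N₀ => ?_
  obtain ⟨Λ, hΛN₀, hΛα⟩ := FinQuot.exists_le_and_le_comap α N₀
  obtain ⟨n, hK⟩ := FinQuot.exists_pullFQ_iterate_fixed α Λ hΛα
  set K := (pullFQ α)^[n] Λ
  obtain ⟨N, hN⟩ := exists_pullFQ_of_eq (hα := hα) hK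
  have hyK : y.1 K = 1 := hN ▸ (profMap_coord_eq_one_iff _ y N).1 (by rw [h]; rfl)
  obtain ⟨z, rfl⟩ := mem_profEventualImage_iff.1 hy n
  have hzK : z.1 K = 1 := by
    rwa [iterate_profMap_coord_eq_one_iff, iterate_fixed hK] at hyK
  exact ProfComp.coord_eq_one_of_le _ hΛN₀ ((iterate_profMap_coord_eq_one_iff n z Λ).2 hzK)

variable (α hα) in
noncomputable def profCompExtension : GroupExtension (profEventualImage α)
    (ProfComp (MappingTorus α hα)) (ProfComp (Multiplicative ℤ)) where
  inl := (profMap (of α hα)).comp (profEventualImage α).subtype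
  rightHom := profMap (proj α hα)
  inl_injective := (injective_iff_map_eq_one _).2 fun y hy =>
    Subtype.ext (eq_one_of_mem_profEventualImage_of_profMap_of_eq_one y.2 hy)
  range_inl_eq_ker_rightHom := by
    refine le_antisymm ?_ fun x hx => ?_
    · rintro _ ⟨y, rfl⟩
      exact profMap_proj_profMap_of (y : ProfComp G)
    · obtain ⟨y, hy, rfl⟩ := exists_mem_profEventualImage_of_profMap_proj_eq_one hx
      exact ⟨⟨y, hy⟩, rfl⟩
  rightHom_surjective := RightInverse.surjective (g := profMap (tpow α hα))
    profMap_proj_profMap_tpow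

variable (α hα) in
noncomputable def profCompSplitting : (profCompExtension α hα).Splitting where
  toMonoidHom := profMap (tpow α hα)
  rightInverse_rightHom := profMap_proj_profMap_tpow

theorem profCompSplitting_conjAct_toProf_ofAdd_one (x : profEventualImage α) :
    ((profCompSplitting α hα).conjAct (toProf _ (Multiplicative.ofAdd 1)) x : ProfComp G) =
      profMap α x := by
  have key : (profCompExtension α hα).inl ((profCompSplitting α hα).conjAct
      (toProf _ (Multiplicative.ofAdd 1)) x) =
      (profCompExtension α hα).inl ⟨profMap α x, profMap_mem_profEventualImage x.2⟩ := by
    rw [GroupExtension.Splitting.conjAct, MonoidHom.comp_apply,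
      GroupExtension.inl_conjAct_comm]
    change profMap (tpow α hα) (toProf _ (Multiplicative.ofAdd 1)) * profMap (of α hα) x *
        (profMap (tpow α hα) (toProf _ (Multiplicative.ofAdd 1)))⁻¹ =
      profMap (of α hα) (profMap α x)
    rw [profMap_of_profMap, profMap_toProf]
    simp [tpow]
  exact congrArg Subtype.val ((profCompExtension α hα).inl_injective key)

end MappingTorus

/-- The profinite completion of the mapping torus `M_α` of an injective endomorphism
`α` of a finitely generated free group `F` is isomorphic to `Ẑ ⋉ P`, where
`P = ⋂ₙ α̂ⁿ(F̂)` is the intersection of the images of the iterates of the induced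
endomorphism `α̂` of the profinite completion `F̂`, and the action of (a generator of)
`Ẑ` is via the restriction of `α̂` to `P`. -/
theorem profComp_mappingTorus_iso_semidirect {ι : Type} [Finite ι]
    (α : FreeGroup ι →* FreeGroup ι) (hα : Function.Injective ⇑α) :
    ∃ ρ : ProfComp (Multiplicative ℤ) →* MulAut (profEventualImage α),
      (∀ x : profEventualImage α,
        ((ρ (toProf (Multiplicative ℤ) (Multiplicative.ofAdd 1)) x : profEventualImage α) :
            ProfComp (FreeGroup ι)) = profMap α (x : ProfComp (FreeGroup ι))) ∧
      Nonempty (ProfComp (MappingTorus α hα) ≃*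
        (profEventualImage α) ⋊[ρ] ProfComp (Multiplicative ℤ)) :=
  ⟨_, MappingTorus.profCompSplitting_conjAct_toProf_ofAdd_one,
    ⟨(MappingTorus.profCompSplitting α hα).semidirectProductMulEquiv.symm⟩⟩
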